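/- arXiv:2305.10742 — 13 statements merged into one kernel-verified Lean document; each statement's English description precedes it below -/
import Mathlib

section
/- For all real x with 0 < x < 1, we have 1/x - 1 < -1/ln(1-x) < 1/x. -/
/-!
Put `L = -log (1 - x)`. The strict tangent-line bounds `1 - y⁻¹ < log y < y - 1` at `y = 1 - x`
give `x < L < x / (1 - x)`; taking reciprocals yields `(1 - x) / x < 1 / L < 1 / x`.
-/

namespace Real

lemma one_sub_inv_lt_log {y : ℝ} (hy : 0 < y) (hy1 : y ≠ 1) : 1 - y⁻¹ < log y := by
  have h := log_lt_sub_one_of_pos (inv_pos.mpr hy) (inv_ne_one.mpr hy1)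
  rw [log_inv] at h
  linarith

lemma lt_neg_log_one_sub {x : ℝ} (hx : x < 1) (hx0 : x ≠ 0) : x < -log (1 - x) := by
  have := log_lt_sub_one_of_pos (sub_pos.mpr hx) (by simpa using hx0)
  linarith

lemma neg_log_one_sub_lt {x : ℝ} (hx : x < 1) (hx0 : x ≠ 0) : -log (1 - x) < x / (1 - x) := by
  have hy : 0 < 1 - x := sub_pos.mpr hx
  have h := one_sub_inv_lt_log hy (by simpa using hx0)
  have hinv : 1 - (1 - x)⁻¹ = -(x / (1 - x)) := by field_simp; ring
  linarith

end Real

theorem stmt_0 (x : ℝ) (h1 : 0 < x) (h2 : x < 1) :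
    1 / x - 1 < -(1 / Real.log (1 - x)) ∧ -(1 / Real.log (1 - x)) < 1 / x := by
  set L := -Real.log (1 - x) with hL
  have hlow : x < L := Real.lt_neg_log_one_sub h2 h1.ne'
  have hupp : L < x / (1 - x) := Real.neg_log_one_sub_lt h2 h1.ne'
  have hLpos : 0 < L := h1.trans hlow
  have hrecip : -(1 / Real.log (1 - x)) = 1 / L := by rw [hL, div_neg]
  rw [hrecip]
  constructor
  · have hx : 1 / x - 1 = 1 / (x / (1 - x)) := by field_simp
    rw [hx]
    exact one_div_lt_one_div_of_lt hLpos hupp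
  · exact one_div_lt_one_div_of_lt h1 hlow
end

section
/- For 0 < p < 1 and nonnegative integers k ≤ p·z, the binomial tail satisfies B_{z,k}(p) ≤ exp(−z·D(k/z ‖ p)), where D is the binary relative entropy. -/
/-- Binomial cumulative distribution function B_{z,k}(p). -/
noncomputable def binCDF (z k : ℕ) (p : ℝ) : ℝ :=
  ∑ j ∈ Finset.range (k + 1), (z.choose j : ℝ) * p ^ j * (1 - p) ^ (z - j)

/-- Binary relative entropy. -/
noncomputable def binRelEnt (p q : ℝ) : ℝ :=
  p * Real.log (p / q) + (1 - p) * Real.log ((1 - p) / (1 - q))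

/-!
Change of measure: with `x = k / z ≤ p`, write `p ^ j * (1 - p) ^ (z - j)` as
`x ^ j * (1 - x) ^ (z - j)` times the likelihood ratio `(p / x) ^ j * ((1 - p) / (1 - x)) ^ (z - j)`.
Since `x ≤ p` this ratio is nondecreasing in `j`, so on `j ≤ k` it is at most its value at `j = k`,
which is `exp (-z * D(x‖p))`; what remains is a binomial probability with parameter `x`, at most `1`.
-/

theorem binCDF_le_one (z k : ℕ) {x : ℝ} (hx0 : 0 ≤ x) (hx1 : x ≤ 1) : binCDF z k x ≤ 1 := by
  have hterm : ∀ j, 0 ≤ (z.choose j : ℝ) * x ^ j * (1 - x) ^ (z - j) := fun j => by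
    have : 0 ≤ 1 - x := by linarith
    positivity
  calc binCDF z k x
      ≤ ∑ j ∈ Finset.range (max k z + 1), (z.choose j : ℝ) * x ^ j * (1 - x) ^ (z - j) :=
        Finset.sum_le_sum_of_subset_of_nonneg (by gcongr; exact le_max_left k z)
          fun j _ _ => hterm j
    _ = ∑ j ∈ Finset.range (z + 1), (z.choose j : ℝ) * x ^ j * (1 - x) ^ (z - j) := by
        refine (Finset.sum_subset (by gcongr; exact le_max_right k z) fun j _ hj => ?_).symm
        rw [Nat.choose_eq_zero_of_lt (by simpa using hj), Nat.cast_zero, zero_mul, zero_mul]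
    _ = 1 := by
        have h := add_pow x (1 - x) z
        rw [add_sub_cancel, one_pow] at h
        exact (Finset.sum_congr rfl fun j _ => by ring).trans h.symm

/-- For `x ≤ p` the likelihood ratio `(p / x) ^ j * ((1 - p) / (1 - x)) ^ (z - j)` is
nondecreasing in `j`; stated cross-multiplied. -/
theorem pow_mul_one_sub_pow_mul_le {j k z : ℕ} (hjk : j ≤ k) (hkz : k ≤ z) {p x : ℝ}
    (hx0 : 0 ≤ x) (hxp : x ≤ p) (hp1 : p ≤ 1) :
    p ^ j * (1 - p) ^ (z - j) * (x ^ k * (1 - x) ^ (z - k)) ≤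
      p ^ k * (1 - p) ^ (z - k) * (x ^ j * (1 - x) ^ (z - j)) := by
  obtain ⟨d, rfl⟩ := Nat.exists_eq_add_of_le hjk
  have hzj : z - j = z - (j + d) + d := by omega
  have hcross : (1 - p) ^ d * x ^ d ≤ p ^ d * (1 - x) ^ d := by
    rw [← mul_pow, ← mul_pow]
    exact pow_le_pow_left₀ (mul_nonneg (by linarith) hx0) (by nlinarith) d
  have hc : 0 ≤ p ^ j * (1 - p) ^ (z - (j + d)) * (x ^ j * (1 - x) ^ (z - (j + d))) := by
    have : 0 ≤ 1 - p := by linarith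
    have : 0 ≤ 1 - x := by linarith
    have : 0 ≤ p := by linarith
    positivity
  calc _ = p ^ j * (1 - p) ^ (z - (j + d)) * (x ^ j * (1 - x) ^ (z - (j + d))) *
        ((1 - p) ^ d * x ^ d) := by rw [hzj]; ring
    _ ≤ p ^ j * (1 - p) ^ (z - (j + d)) * (x ^ j * (1 - x) ^ (z - (j + d))) *
        (p ^ d * (1 - x) ^ d) := by gcongr
    _ = _ := by rw [hzj]; ring

theorem binCDF_mul_le {z k : ℕ} (hkz : k ≤ z) {p x : ℝ} (hx0 : 0 ≤ x) (hxp : x ≤ p)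
    (hp1 : p ≤ 1) :
    binCDF z k p * (x ^ k * (1 - x) ^ (z - k)) ≤ p ^ k * (1 - p) ^ (z - k) := by
  calc binCDF z k p * (x ^ k * (1 - x) ^ (z - k))
      = ∑ j ∈ Finset.range (k + 1),
          (z.choose j : ℝ) * (p ^ j * (1 - p) ^ (z - j) * (x ^ k * (1 - x) ^ (z - k))) := by
        rw [binCDF, Finset.sum_mul]
        exact Finset.sum_congr rfl fun j _ => by ring
    _ ≤ ∑ j ∈ Finset.range (k + 1),
          (z.choose j : ℝ) * (p ^ k * (1 - p) ^ (z - k) * (x ^ j * (1 - x) ^ (z - j))) := by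
        refine Finset.sum_le_sum fun j hj => mul_le_mul_of_nonneg_left ?_ (Nat.cast_nonneg _)
        exact pow_mul_one_sub_pow_mul_le (Finset.mem_range_succ_iff.mp hj) hkz hx0 hxp hp1
    _ = p ^ k * (1 - p) ^ (z - k) * binCDF z k x := by
        rw [binCDF, Finset.mul_sum]
        exact Finset.sum_congr rfl fun j _ => by ring
    _ ≤ p ^ k * (1 - p) ^ (z - k) := by
        have : 0 ≤ 1 - p := by linarith
        have : 0 ≤ p := by linarith
        exact mul_le_of_le_one_right (by positivity) (binCDF_le_one z k hx0 (by linarith))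

theorem exp_neg_mul_binRelEnt {x p : ℝ} (hx0 : 0 < x) (hx1 : x < 1) (hp0 : 0 < p) (hp1 : p < 1)
    (t : ℝ) :
    Real.exp (-t * binRelEnt x p) = (p / x) ^ (t * x) * ((1 - p) / (1 - x)) ^ (t * (1 - x)) := by
  have hq : 0 < 1 - p := by linarith
  have hy : 0 < 1 - x := by linarith
  rw [Real.rpow_def_of_pos (by positivity), Real.rpow_def_of_pos (by positivity), ← Real.exp_add,
    binRelEnt, Real.log_div hx0.ne' hp0.ne', Real.log_div hy.ne' hq.ne',
    Real.log_div hp0.ne' hx0.ne', Real.log_div hq.ne' hy.ne']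
  ring_nf

theorem binCDF_zero_right (z : ℕ) (p : ℝ) : binCDF z 0 p = (1 - p) ^ z := by
  simp [binCDF]

theorem stmt_3 (z k : ℕ) (p : ℝ) (hp0 : 0 < p) (hp1 : p < 1)
    (hk : (k : ℝ) ≤ p * z) :
    binCDF z k p ≤ Real.exp (-(z : ℝ) * binRelEnt ((k : ℝ) / (z : ℝ)) p) := by
  rcases k.eq_zero_or_pos with rfl | hk0
  · have hD : binRelEnt 0 p = -Real.log (1 - p) := by simp [binRelEnt]
    rw [binCDF_zero_right, Nat.cast_zero, zero_div, hD, neg_mul_neg, Real.exp_nat_mul,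
      Real.exp_log (by linarith)]
  have hkR : (0 : ℝ) < k := by exact_mod_cast hk0
  have hz : (0 : ℝ) < z := by nlinarith
  have hkz : k ≤ z := by
    have : (k : ℝ) ≤ z := hk.trans (by nlinarith)
    exact_mod_cast this
  set x := (k : ℝ) / z
  have hx0 : 0 < x := by positivity
  have hxp : x ≤ p := (div_le_iff₀ hz).mpr hk
  have hzx : (z : ℝ) * x = k := mul_div_cancel₀ _ hz.ne'
  have hzx' : (z : ℝ) * (1 - x) = ((z - k : ℕ) : ℝ) := by push_cast [hkz]; linarith
  have hx1 : 0 < 1 - x := by linarith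
  rw [exp_neg_mul_binRelEnt hx0 (by linarith) hp0 hp1, hzx, hzx', Real.rpow_natCast,
    Real.rpow_natCast, div_pow p x, div_pow (1 - p) (1 - x), div_mul_div_comm,
    le_div_iff₀ (by positivity)]
  exact binCDF_mul_le hkz hx0.le hxp hp1.le
end

section
/- For positive integers k, z with k ≤ z − 1 and 0 < p < 1, the binomial tail satisfies the reverse Chernoff bound B_{z,k}(p) ≥ (1/(e·√k)) · exp(−z·D(k/z ‖ p)). -/
open Real Nat

theorem Stirling.factorial_le_exp_mul_sqrt_mul_pow {n : ℕ} (hn : n ≠ 0) :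
    (n ! : ℝ) ≤ exp 1 * √n * (n / exp 1) ^ n := by
  have hseq : stirlingSeq n ≤ exp 1 / √2 := by
    obtain ⟨n, rfl⟩ := Nat.exists_eq_succ_of_ne_zero hn
    exact stirlingSeq_one ▸ stirlingSeq'_antitone (Nat.zero_le n)
  have hn' : (0 : ℝ) < n := Nat.cast_pos.2 (Nat.pos_of_ne_zero hn)
  have hpos : 0 < √(2 * n : ℝ) * (n / exp 1) ^ n := by positivity
  calc (n ! : ℝ) = stirlingSeq n * (√(2 * n : ℝ) * (n / exp 1) ^ n) := by
        rw [stirlingSeq, div_mul_cancel₀ _ hpos.ne']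
    _ ≤ exp 1 / √2 * (√(2 * n : ℝ) * (n / exp 1) ^ n) := by gcongr
    _ = exp 1 * √n * (n / exp 1) ^ n := by rw [sqrt_mul zero_le_two]; field_simp

theorem add_one_pow_le_exp_one_mul_pow (n : ℕ) : ((n : ℝ) + 1) ^ n ≤ exp 1 * n ^ n := by
  rcases eq_or_ne n 0 with rfl | hn
  · simp [one_le_exp zero_le_one]
  calc ((n : ℝ) + 1) ^ n = (1 + (n : ℝ)⁻¹) ^ n * n ^ n := by
        rw [← mul_pow, add_mul, inv_mul_cancel₀ (by exact_mod_cast hn), one_mul, add_comm]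
    _ ≤ exp 1 * n ^ n := by gcongr; exact one_add_inv_pow_le_exp

theorem antitone_div_exp_one_pow_div_factorial :
    Antitone fun n : ℕ => ((n : ℝ) / exp 1) ^ n / n ! := by
  refine antitone_nat_of_succ_le fun n => ?_
  rw [div_le_div_iff₀ (by positivity) (by positivity), div_pow, div_pow, factorial_succ]
  push_cast
  rw [div_mul_eq_mul_div, div_mul_eq_mul_div, div_le_div_iff₀ (by positivity) (by positivity)]
  have hpow := add_one_pow_le_exp_one_mul_pow n
  calc ((n : ℝ) + 1) ^ (n + 1) * n ! * exp 1 ^ n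
      = ((n : ℝ) + 1) ^ n * (((n : ℝ) + 1) * n ! * exp 1 ^ n) := by ring
    _ ≤ exp 1 * n ^ n * (((n : ℝ) + 1) * n ! * exp 1 ^ n) := by gcongr
    _ = n ^ n * (((n : ℝ) + 1) * n !) * exp 1 ^ (n + 1) := by ring

theorem add_pow_le_choose_mul_pow_mul_pow {k : ℕ} (hk : k ≠ 0) (m : ℕ) :
    ((k : ℝ) + m) ^ (k + m) ≤ (k + m).choose k * k ^ k * m ^ m * (exp 1 * √k) := by
  have hfac : ((k + m)! : ℝ) = (k + m).choose k * k ! * m ! := by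
    rw [Nat.choose_symm_add]
    exact_mod_cast (Nat.add_choose_mul_factorial_mul_factorial k m).symm
  have hanti :
      (((k + m : ℕ) : ℝ) / exp 1) ^ (k + m) / (k + m)! ≤ ((m : ℝ) / exp 1) ^ m / m ! :=
    antitone_div_exp_one_pow_div_factorial (Nat.le_add_left m k)
  have hstir := Stirling.factorial_le_exp_mul_sqrt_mul_pow hk
  have key : (((k : ℝ) + m) / exp 1) ^ (k + m) ≤
      (k + m).choose k * (exp 1 * √k * (k / exp 1) ^ k) * (m / exp 1) ^ m := by
    calc (((k : ℝ) + m) / exp 1) ^ (k + m)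
        = (((k + m : ℕ) : ℝ) / exp 1) ^ (k + m) / (k + m)! * (k + m)! := by
          push_cast; field_simp
      _ ≤ ((m : ℝ) / exp 1) ^ m / m ! * ((k + m).choose k * k ! * m !) := by
          rw [hfac] at hanti ⊢; gcongr
      _ = (k + m).choose k * k ! * (m / exp 1) ^ m := by field_simp
      _ ≤ (k + m).choose k * (exp 1 * √k * (k / exp 1) ^ k) * (m / exp 1) ^ m := by gcongr
  rw [div_pow, div_pow, div_pow, div_le_iff₀ (by positivity)] at key
  calc ((k : ℝ) + m) ^ (k + m) ≤ _ := key
    _ = (k + m).choose k * k ^ k * m ^ m * (exp 1 * √k) := by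
        rw [pow_add]; field_simp

theorem exp_neg_mul_binRelEnt_s4 {k m : ℕ} (hk : k ≠ 0) (hm : m ≠ 0) {p : ℝ} (hp0 : 0 < p)
    (hp1 : p < 1) :
    exp (-((k : ℝ) + m) * binRelEnt (k / (k + m)) p) =
      ((k : ℝ) + m) ^ (k + m) / (k ^ k * m ^ m) * (p ^ k * (1 - p) ^ m) := by
  have hkR : (0 : ℝ) < k := by positivity
  have hmR : (0 : ℝ) < m := by positivity
  have hq : 0 < 1 - p := by linarith
  have hcompl : 1 - (k : ℝ) / (k + m) = m / (k + m) := by field_simp; ring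
  have hexp : -((k : ℝ) + m) * binRelEnt (k / (k + m)) p =
      k * log ((k + m) * p / k) + m * log ((k + m) * (1 - p) / m) := by
    have hinv₁ : (k : ℝ) / (k + m) / p = ((k + m) * p / k)⁻¹ := by field_simp
    have hinv₂ : (m : ℝ) / (k + m) / (1 - p) = ((k + m) * (1 - p) / m)⁻¹ := by field_simp
    rw [binRelEnt, hcompl, hinv₁, hinv₂, log_inv, log_inv]
    field_simp
    ring
  rw [hexp, exp_add, exp_nat_mul, exp_nat_mul, exp_log (by positivity), exp_log (by positivity),
    div_pow, div_pow, mul_pow, mul_pow, pow_add]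
  ring

theorem choose_mul_pow_mul_pow_le_binCDF (z k : ℕ) {p : ℝ} (hp0 : 0 ≤ p) (hp1 : p ≤ 1) :
    z.choose k * p ^ k * (1 - p) ^ (z - k) ≤ binCDF z k p :=
  Finset.single_le_sum (f := fun j => (z.choose j : ℝ) * p ^ j * (1 - p) ^ (z - j))
    (fun j _ => by have hq : 0 ≤ 1 - p := sub_nonneg.2 hp1; positivity) (Finset.self_mem_range_succ k)

theorem stmt_4 (z k : ℕ) (hk : 1 ≤ k) (hkz : k + 1 ≤ z) (p : ℝ)
    (hp0 : 0 < p) (hp1 : p < 1) :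
    1 / (Real.exp 1 * Real.sqrt k) *
      Real.exp (-(z : ℝ) * binRelEnt ((k : ℝ) / (z : ℝ)) p) ≤ binCDF z k p := by
  obtain ⟨m, rfl⟩ := Nat.exists_eq_add_of_le (Nat.le_of_succ_le hkz)
  have hk0 : k ≠ 0 := by omega
  have hm0 : m ≠ 0 := by omega
  have hterm := choose_mul_pow_mul_pow_le_binCDF (k + m) k hp0.le hp1.le
  rw [Nat.add_sub_cancel_left] at hterm
  push_cast
  rw [exp_neg_mul_binRelEnt_s4 hk0 hm0 hp0 hp1]
  calc 1 / (exp 1 * √k) * (((k : ℝ) + m) ^ (k + m) / (k ^ k * m ^ m) * (p ^ k * (1 - p) ^ m))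
      = ((k : ℝ) + m) ^ (k + m) / (k ^ k * m ^ m * (exp 1 * √k)) * (p ^ k * (1 - p) ^ m) := by
        field_simp
    _ ≤ (k + m).choose k * (p ^ k * (1 - p) ^ m) := by
        have hq : 0 ≤ 1 - p := by linarith
        gcongr
        rw [div_le_iff₀ (by positivity)]
        exact (add_pow_le_choose_mul_pow_mul_pow hk0 m).trans_eq (by ring)
    _ ≤ binCDF (k + m) k p := by rwa [← mul_assoc]
end

section
/- For every integer k ≥ 1 and integer z ≥ k, the binomial cumulative distribution satisfies B_{z,k}(k/z) > 1/2. -/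
open Finset

noncomputable def binPMF (n : ℕ) (p : ℝ) (j : ℕ) : ℝ :=
  (n.choose j : ℝ) * p ^ j * (1 - p) ^ (n - j)

section binPMF

variable {n : ℕ} {p : ℝ}

theorem binCDF_eq_sum_binPMF (n k : ℕ) (p : ℝ) :
    binCDF n k p = ∑ j ∈ range (k + 1), binPMF n p j := rfl

theorem binPMF_eq_eval_bernsteinPolynomial (n j : ℕ) (p : ℝ) :
    binPMF n p j = (bernsteinPolynomial ℝ n j).eval p := by
  simp [binPMF, bernsteinPolynomial]

theorem binPMF_pos (hp₀ : 0 < p) (hp₁ : p < 1) {j : ℕ} (hj : j ≤ n) : 0 < binPMF n p j := by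
  have : 0 < 1 - p := by linarith
  have : (0 : ℝ) < n.choose j := by exact_mod_cast Nat.choose_pos hj
  unfold binPMF; positivity

theorem sum_binPMF (n : ℕ) (p : ℝ) : ∑ j ∈ range (n + 1), binPMF n p j = 1 := by
  simpa [binPMF_eq_eval_bernsteinPolynomial, Polynomial.eval_finsetSum] using
    congrArg (Polynomial.eval p) (bernsteinPolynomial.sum ℝ n)

theorem sum_mul_binPMF (n : ℕ) (p : ℝ) : ∑ j ∈ range (n + 1), j * binPMF n p j = n * p := by
  simpa [binPMF_eq_eval_bernsteinPolynomial, Polynomial.eval_finsetSum] using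
    congrArg (Polynomial.eval p) (bernsteinPolynomial.sum_smul ℝ n)

theorem binPMF_one_sub {j : ℕ} (hj : j ≤ n) : binPMF n (1 - p) j = binPMF n p (n - j) := by
  simp only [binPMF, sub_sub_cancel, Nat.sub_sub_self hj, Nat.choose_symm hj]
  ring

theorem binPMF_succ_mul (n j : ℕ) (p : ℝ) :
    binPMF n p (j + 1) * ((j + 1) * (1 - p)) = binPMF n p j * ((n - j) * p) := by
  rcases lt_or_ge j n with hj | hj
  · have hchoose : (n.choose (j + 1) : ℝ) * (j + 1) = n.choose j * (n - j) := by
      rw [← Nat.cast_sub hj.le]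
      exact_mod_cast Nat.choose_succ_right_eq n j
    obtain ⟨d, rfl⟩ := Nat.exists_eq_add_of_lt hj
    simp only [binPMF, show j + d + 1 - (j + 1) = d by omega, show j + d + 1 - j = d + 1 by omega]
    linear_combination p ^ (j + 1) * (1 - p) ^ (d + 1) * hchoose
  · have hzero : binPMF n p (j + 1) = 0 := by
      simp [binPMF, Nat.choose_eq_zero_of_lt (Nat.lt_succ_of_le hj)]
    rcases hj.eq_or_lt with rfl | hlt
    · simp [hzero]
    · rw [hzero, zero_mul]
      simp [binPMF, Nat.choose_eq_zero_of_lt hlt]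

end binPMF

section RatioSteps

variable {w r : ℕ → ℝ} {a b : ℕ}

theorem lt_succ_of_succ_lt_of_one_le_mul (hw : ∀ j, w (j + 1) = w j * r j) (ha : 0 ≤ w a)
    (hb : 0 < r b) (hr : 1 ≤ r a * r b) (h : w (a + 1) < w b) : w a < w (b + 1) := by
  rw [hw] at h ⊢
  nlinarith [mul_lt_mul_of_pos_right h hb]

theorem succ_le_of_le_succ_of_mul_le_one (hw : ∀ j, w (j + 1) = w j * r j) (ha : 0 ≤ w a)
    (hb : 0 ≤ r b) (hr : r a * r b ≤ 1) (h : w b ≤ w (a + 1)) : w (b + 1) ≤ w a := by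
  rw [hw] at h ⊢
  nlinarith [mul_le_mul_of_nonneg_right h hb]

end RatioSteps

theorem sum_nonpos_of_sum_mul_eq_zero {D : ℕ → ℝ} {N : ℕ} (h₀ : D 0 ≤ 0)
    (hsucc : ∀ i < N, 0 < D i → 0 < D (i + 1))
    (hmoment : ∑ i ∈ range (N + 1), (i : ℝ) * D i = 0) : ∑ i ∈ range (N + 1), D i ≤ 0 := by
  by_cases hpos : ∃ i, i ≤ N ∧ 0 < D i
  · classical
    set f := Nat.find hpos
    have hf : f ≤ N ∧ 0 < D f := Nat.find_spec hpos
    have hf₀ : 0 < f := Nat.pos_of_ne_zero fun h ↦ by linarith [h ▸ hf.2]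
    have hsign : ∀ i ≤ N, 0 ≤ ((i : ℝ) - f) * D i := by
      intro i hiN
      rcases lt_or_ge i f with hif | hfi
      · have hD : D i ≤ 0 := not_lt.mp fun h ↦ Nat.find_min hpos hif ⟨hiN, h⟩
        have : (i : ℝ) ≤ f := by exact_mod_cast hif.le
        exact mul_nonneg_of_nonpos_of_nonpos (by linarith) hD
      · have hD : 0 < D i := by
          induction i, hfi using Nat.le_induction with
          | base => exact hf.2
          | succ i hfi ih => exact hsucc i (by omega) (ih (by omega))
        have : (f : ℝ) ≤ i := by exact_mod_cast hfi
        exact mul_nonneg (by linarith) hD.le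
    have hsum : ∑ i ∈ range (N + 1), ((i : ℝ) - f) * D i = -(f * ∑ i ∈ range (N + 1), D i) := by
      simp only [sub_mul, sum_sub_distrib, hmoment, mul_sum]
      ring
    have : (0 : ℝ) < f := by exact_mod_cast hf₀
    nlinarith [sum_nonneg fun i hi ↦ hsign i (Nat.lt_succ_iff.mp (mem_range.mp hi))]
  · push Not at hpos
    exact sum_nonpos fun i hi ↦ hpos i (Nat.lt_succ_iff.mp (mem_range.mp hi))

theorem sum_range_ite_le {f : ℕ → ℝ} {k m : ℕ} (hkm : k ≤ m) :
    ∑ i ∈ range (m + 1), (if i ≤ k then f i else 0) = ∑ i ∈ range (k + 1), f i := by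
  rw [← sum_filter]
  congr 1
  ext i
  simp only [mem_filter, mem_range]
  omega

theorem sum_range_binPMF_add_sum_range_binPMF_add (k m : ℕ) (p : ℝ) :
    ∑ j ∈ range k, binPMF (k + m) p j + ∑ i ∈ range (m + 1), binPMF (k + m) p (k + i) = 1 := by
  rw [← sum_range_add, ← add_assoc, sum_binPMF]

theorem binCDF_add_sum_range_binPMF_one_sub (k m : ℕ) (p : ℝ) :
    binCDF (k + m) k p + ∑ j ∈ range m, binPMF (k + m) (1 - p) j = 1 := by
  have hflip : ∀ i ∈ range m, binPMF (k + m) (1 - p) (m - 1 - i) = binPMF (k + m) p (k + 1 + i) := by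
    intro i hi
    have hi : i < m := mem_range.mp hi
    rw [binPMF_one_sub (by omega)]
    congr 1
    omega
  rw [← sum_range_reflect, sum_congr rfl hflip, binCDF_eq_sum_binPMF, ← sum_range_add,
    show k + 1 + m = k + m + 1 by ring, sum_binPMF]

noncomputable def binRatio (k m j : ℕ) : ℝ := ((k : ℝ) + m - j) * k / ((j + 1) * m)

section MeanBinomial

variable {k m : ℕ}

local notation "w" => binPMF (k + m) ((k : ℝ) / (k + m : ℕ))

theorem binPMF_mean_succ (hm : 0 < m) (j : ℕ) : w (j + 1) = w j * binRatio k m j := by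
  have hm' : (0 : ℝ) < m := by exact_mod_cast hm
  have hn : (0 : ℝ) < (k + m : ℕ) := by push_cast; positivity
  have h := binPMF_succ_mul (k + m) j ((k : ℝ) / (k + m : ℕ))
  rw [binRatio]
  field_simp at h ⊢
  push_cast at h ⊢
  linear_combination h

theorem binPMF_mean_pos (hk : 0 < k) (hm : 0 < m) {j : ℕ} (hj : j ≤ k + m) : 0 < w j := by
  have hk' : (0 : ℝ) < k := by exact_mod_cast hk
  have hm' : (0 : ℝ) < m := by exact_mod_cast hm
  apply binPMF_pos _ _ hj <;> push_cast
  · positivity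
  · rw [div_lt_one (by positivity)]; linarith

theorem binRatio_pos (hk : 0 < k) (hm : 0 < m) {j : ℕ} (hj : j < k + m) : 0 < binRatio k m j := by
  have hk' : (0 : ℝ) < k := by exact_mod_cast hk
  have hm' : (0 : ℝ) < m := by exact_mod_cast hm
  have hj' : (j : ℝ) < k + m := by exact_mod_cast hj
  unfold binRatio
  apply div_pos (mul_pos (by linarith) hk') (by positivity)

theorem one_lt_binRatio_of_succ_eq (hm : 0 < m) {a : ℕ} (h : a + 1 = k) : 1 < binRatio k m a := by
  have hm' : (0 : ℝ) < m := by exact_mod_cast hm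
  have ha : (a : ℝ) + 1 = k := by exact_mod_cast h
  unfold binRatio
  rw [one_lt_div (by positivity)]
  nlinarith

theorem one_le_binRatio_mul_of_add_eq (hm : 0 < m) (hkm : k ≤ m) {a t : ℕ} (h : a + t + 2 = k) :
    1 ≤ binRatio k m a * binRatio k m (k + t) := by
  have hm' : (0 : ℝ) < m := by exact_mod_cast hm
  have hkm' : (k : ℝ) ≤ m := by exact_mod_cast hkm
  have ha : (a : ℝ) + t + 2 = k := by exact_mod_cast h
  unfold binRatio
  rw [div_mul_div_comm, one_le_div (by positivity)]
  push_cast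
  have key : (k + m - a) * k * ((k + m - (k + t)) * k) - (a + 1) * m * ((k + t + 1) * m)
      = (2 * m + 1) * k ^ 2 + (t + 1) ^ 2 * ((m - k) * (m + k) : ℝ) := by
    rw [← ha]; ring
  have : (0 : ℝ) ≤ (t + 1) ^ 2 * ((m - k) * (m + k)) := by
    have : (0 : ℝ) ≤ k := by linarith [(a.cast_nonneg : (0 : ℝ) ≤ a), (t.cast_nonneg : (0 : ℝ) ≤ t)]
    have : (0 : ℝ) ≤ m - k := by linarith
    positivity
  nlinarith [sq_nonneg (k : ℝ)]

-- The pair ratio `w (k + i) / w (k - i)` grows from `i` to `i + 1` iff this product is `≥ 1`.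
theorem one_le_binRatio_mul_iff (hm : 0 < m) {a i : ℕ} (h : a + i + 1 = k) :
    1 ≤ binRatio k m a * binRatio k m (k + i) ↔
      (k * m * (m - k) : ℝ) ≤ i * (i + 1) * (m ^ 2 - k ^ 2) := by
  have hm' : (0 : ℝ) < m := by exact_mod_cast hm
  have ha : (a : ℝ) + i + 1 = k := by exact_mod_cast h
  unfold binRatio
  rw [div_mul_div_comm, one_le_div (by positivity)]
  push_cast
  have key : (k + m - a) * k * ((k + m - (k + i)) * k) - (a + 1) * m * ((k + i + 1) * m)
      = i * (i + 1) * (m ^ 2 - k ^ 2) - k * m * (m - k : ℝ) := by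
    rw [← ha]; ring
  constructor <;> intro <;> linarith

theorem binPMF_mean_lt_add (hk : 0 < k) (hkm : k ≤ m) :
    ∀ t a, a + t + 1 = k → w a < w (k + t) := by
  have hm : 0 < m := hk.trans_le hkm
  intro t
  induction t with
  | zero =>
    intro a h
    rw [show k + 0 = a + 1 by omega, binPMF_mean_succ hm]
    exact lt_mul_of_one_lt_right (binPMF_mean_pos hk hm (j := a) (by omega))
      (one_lt_binRatio_of_succ_eq hm h)
  | succ t ih =>
    intro a h
    exact lt_succ_of_succ_lt_of_one_le_mul (a := a) (b := k + t) (binPMF_mean_succ hm)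
      (binPMF_mean_pos hk hm (by omega)).le (binRatio_pos hk hm (by omega))
      (one_le_binRatio_mul_of_add_eq hm hkm (by omega)) (ih (a + 1) (by omega))

theorem sum_range_binPMF_mean_lt_half (hkm : k ≤ m) : ∑ j ∈ range k, w j < 1 / 2 := by
  rcases Nat.eq_zero_or_pos k with rfl | hk
  · norm_num
  have hlower : ∑ j ∈ range k, w j < ∑ t ∈ range k, w (k + t) := by
    rw [← sum_range_reflect]
    exact sum_lt_sum_of_nonempty (nonempty_range_iff.mpr hk.ne')
      fun t ht ↦ binPMF_mean_lt_add hk hkm t _ (by have := mem_range.mp ht; omega)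
  have hupper : ∑ t ∈ range k, w (k + t) ≤ ∑ t ∈ range (m + 1), w (k + t) :=
    sum_le_sum_of_subset_of_nonneg (range_subset_range.mpr (by omega))
      fun j hj _ ↦ (binPMF_mean_pos hk (hk.trans_le hkm) (by have := mem_range.mp hj; omega)).le
  linarith [sum_range_binPMF_add_sum_range_binPMF_add k m ((k : ℝ) / (k + m : ℕ))]

noncomputable def pairDiff (k m i : ℕ) : ℝ :=
  binPMF (k + m) ((k : ℝ) / (k + m : ℕ)) (k + i) -
    if i ≤ k then binPMF (k + m) ((k : ℝ) / (k + m : ℕ)) (k - i) else 0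

theorem binPMF_mean_add_le_of_lt (hm : 0 < m) (hkm : k ≤ m) :
    ∀ i a, a + i = k → (i * (i + 1) * (m ^ 2 - k ^ 2) : ℝ) < k * m * (m - k) →
      w (k + i) ≤ w a := by
  have hk₀ : (0 : ℝ) ≤ k := k.cast_nonneg
  have hkm' : (k : ℝ) ≤ m := by exact_mod_cast hkm
  intro i
  induction i with
  | zero => intro a h _; rw [← h]; rfl
  | succ i ih =>
    intro a h hi
    have hi' : (i * (i + 1) * (m ^ 2 - k ^ 2) : ℝ) < k * m * (m - k) := by
      push_cast at hi
      have : (0 : ℝ) ≤ m ^ 2 - k ^ 2 := by nlinarith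
      have : (0 : ℝ) ≤ i := i.cast_nonneg
      nlinarith
    exact succ_le_of_le_succ_of_mul_le_one (a := a) (b := k + i) (binPMF_mean_succ hm)
      (binPMF_mean_pos (by omega) hm (j := a) (by omega)).le
      (binRatio_pos (by omega) hm (by omega)).le
      (not_le.mp fun h' ↦ hi'.not_ge ((one_le_binRatio_mul_iff hm (by omega)).mp h')).le
      (ih (a + 1) (by omega) hi')

theorem pairDiff_succ_pos (hk : 0 < k) (hkm : k ≤ m) {i : ℕ} (hi : i < m)
    (h : 0 < pairDiff k m i) : 0 < pairDiff k m (i + 1) := by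
  have hm : 0 < m := hk.trans_le hkm
  unfold pairDiff at h ⊢
  by_cases hik : i + 1 ≤ k
  · obtain ⟨a, rfl⟩ : ∃ a, k = a + i + 1 := ⟨k - i - 1, by omega⟩
    rw [if_pos (by omega), show a + i + 1 - i = a + 1 by omega] at h
    rw [if_pos hik, show a + i + 1 - (i + 1) = a by omega, sub_pos]
    have hcross := not_lt.mp fun hlt ↦
      (binPMF_mean_add_le_of_lt hm hkm i (a + 1) (by omega) hlt).not_gt (sub_pos.mp h)
    exact lt_succ_of_succ_lt_of_one_le_mul (a := a) (b := a + i + 1 + i) (binPMF_mean_succ hm)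
      (binPMF_mean_pos hk hm (by omega)).le (binRatio_pos hk hm (by omega))
      ((one_le_binRatio_mul_iff hm rfl).mpr hcross) (sub_pos.mp h)
  · rw [if_neg hik, sub_zero]
    exact binPMF_mean_pos hk hm (by omega)

theorem sum_pairDiff (hkm : k ≤ m) :
    ∑ i ∈ range (m + 1), pairDiff k m i =
      ∑ i ∈ range (m + 1), w (k + i) - binCDF (k + m) k ((k : ℝ) / (k + m : ℕ)) := by
  have hreflect := sum_range_reflect w (k + 1)
  simp only [Nat.add_sub_cancel] at hreflect
  simp only [pairDiff, sum_sub_distrib, sum_range_ite_le hkm, hreflect, binCDF_eq_sum_binPMF]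

theorem sum_mul_pairDiff (hkm : k ≤ m) :
    ∑ i ∈ range (m + 1), (i : ℝ) * pairDiff k m i = 0 := by
  have hnp : ((k + m : ℕ) : ℝ) * (k / (k + m : ℕ)) = k := by
    rcases Nat.eq_zero_or_pos k with rfl | hk
    · simp
    · field_simp
  have hmean : ∑ j ∈ range (k + (m + 1)), ((j : ℝ) - k) * w j = 0 := by
    simp only [sub_mul, sum_sub_distrib, ← mul_sum, ← add_assoc, sum_mul_binPMF, sum_binPMF, hnp]
    ring
  have hlower : ∑ i ∈ range (k + 1), (i : ℝ) * w (k - i) = ∑ j ∈ range k, ((k : ℝ) - j) * w j := by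
    calc ∑ i ∈ range (k + 1), (i : ℝ) * w (k - i)
        = ∑ j ∈ range (k + 1), ((k : ℝ) - j) * w j := by
          rw [← sum_range_reflect]
          refine sum_congr rfl fun j hj ↦ ?_
          have hj : j ≤ k := Nat.lt_succ_iff.mp (mem_range.mp hj)
          rw [Nat.add_sub_cancel, Nat.sub_sub_self hj, Nat.cast_sub hj]
      _ = ∑ j ∈ range k, ((k : ℝ) - j) * w j := by
          rw [sum_range_succ, sub_self, zero_mul, add_zero]
  have hbelow : ∑ j ∈ range k, ((j : ℝ) - k) * w j = -∑ j ∈ range k, ((k : ℝ) - j) * w j := by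
    rw [← sum_neg_distrib]
    exact sum_congr rfl fun j _ ↦ by ring
  have habove : ∑ i ∈ range (m + 1), (((k + i : ℕ) : ℝ) - k) * w (k + i) =
      ∑ i ∈ range (m + 1), (i : ℝ) * w (k + i) :=
    sum_congr rfl fun i _ ↦ by push_cast; ring
  rw [sum_range_add, hbelow, habove] at hmean
  simp only [pairDiff, mul_sub, mul_ite, mul_zero, sum_sub_distrib, sum_range_ite_le hkm, hlower]
  linarith

theorem half_lt_binCDF_mean (hk : 0 < k) (hkm : k ≤ m) :
    1 / 2 < binCDF (k + m) k ((k : ℝ) / (k + m : ℕ)) := by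
  have hzero : pairDiff k m 0 = 0 := by simp [pairDiff]
  have hupper := sum_nonpos_of_sum_mul_eq_zero hzero.le
    (fun i hi ↦ pairDiff_succ_pos hk hkm hi) (sum_mul_pairDiff hkm)
  rw [sum_pairDiff hkm] at hupper
  have hsplit := sum_range_binPMF_add_sum_range_binPMF_add k m ((k : ℝ) / (k + m : ℕ))
  rw [binCDF_eq_sum_binPMF] at hupper ⊢
  linarith [sum_range_succ w k, binPMF_mean_pos hk (hk.trans_le hkm) (j := k) (by omega)]

end MeanBinomial

theorem stmt_5 (k z : ℕ) (hk : 1 ≤ k) (hz : k ≤ z) :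
    1 / 2 < binCDF z k ((k : ℝ) / (z : ℝ)) := by
  obtain ⟨m, rfl⟩ := Nat.exists_eq_add_of_le hz
  rcases le_or_gt k m with hkm | hmk
  · exact half_lt_binCDF_mean hk hkm
  · have hupper := sum_range_binPMF_mean_lt_half hmk.le
    have hflip : 1 - (k : ℝ) / (k + m : ℕ) = m / (k + m : ℕ) := by
      have : (0 : ℝ) < k := by exact_mod_cast hk
      push_cast
      field_simp
      ring
    have hsplit := binCDF_add_sum_range_binPMF_one_sub k m ((k : ℝ) / (k + m : ℕ))
    rw [hflip] at hsplit
    rw [Nat.add_comm m k] at hupper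
    linarith
end

section
/- Let 0 < λ < 1, ν = 1 − λ, 0 < δ < 1, and k a nonnegative integer. Define z*(k,δ,λ) as the smallest integer z ≥ k with B_{z,k}(ν) ≤ δ. Then z*(k,δ,λ) ≤ k/ν + √(2ν k ln(1/δ))/(2ν²) + ln(1/δ)/(2ν²) + 1. -/
/-- z*(k,δ,λ): the smallest integer z ≥ k with B_{z,k}(1-λ) ≤ δ. -/
noncomputable def zStar (k : ℕ) (δ lam : ℝ) : ℕ :=
  sInf {z : ℕ | k ≤ z ∧ binCDF z k (1 - lam) ≤ δ}

open Real MeasureTheory ProbabilityTheory Finset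

lemma one_sub_add_mul_exp_le {p : ℝ} (hp : p ∈ Set.Icc 0 1) (t : ℝ) :
    1 - p + p * exp t ≤ exp (p * t + t ^ 2 / 8) := by
  set q : unitInterval := ⟨p, hp⟩
  have hX : ∀ᵐ x ∂Ber((1 : ℝ), 0, q), x ∈ Set.Icc (0 : ℝ) 1 := by
    rw [ae_iff, ← Set.compl_def,
      bernoulliMeasure_apply_of_notMem_of_notMem _ measurableSet_Icc.compl] <;> simp
  have hmean : ∫ x, x ∂Ber((1 : ℝ), 0, q) = p := by simp [q, integral_bernoulliMeasure]
  have hoeffding := (hasSubgaussianMGF_of_mem_Icc (X := id) aemeasurable_id hX).mgf_le t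
  rw [show (fun x => id x - ∫ y, id y ∂Ber((1 : ℝ), 0, q)) = fun x => x + -p by
    ext; simp [hmean]; ring, mgf_add_const] at hoeffding
  simp only [mgf, integral_bernoulliMeasure, smul_eq_mul, mul_one, mul_zero, exp_zero,
    q] at hoeffding
  have hvar : (((‖(1 : ℝ) - 0‖₊ / 2) ^ 2 : NNReal) : ℝ) * t ^ 2 / 2 = t ^ 2 / 8 := by
    norm_num; ring
  calc 1 - p + p * exp t = (p * exp t + (1 - p)) * exp (t * -p) * exp (p * t) := by
        rw [mul_assoc, ← exp_add, show t * -p + p * t = 0 by ring, exp_zero]; ring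
    _ ≤ exp (t ^ 2 / 8) * exp (p * t) := by
        gcongr; rwa [← hvar]
    _ = exp (p * t + t ^ 2 / 8) := by rw [← exp_add, add_comm]

lemma binCDF_le_exp_mul_pow {z k : ℕ} {p t : ℝ} (hp : p ∈ Set.Icc 0 1) (ht : 0 ≤ t)
    (hkz : k ≤ z) :
    binCDF z k p ≤ exp (t * k) * (1 - p + p * exp (-t)) ^ z := by
  obtain ⟨hp0, hp1⟩ := hp
  set f : ℕ → ℝ := fun j => (p * exp (-t)) ^ j * (1 - p) ^ (z - j) * z.choose j
  have hterm : ∀ j ∈ range (k + 1),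
      (z.choose j : ℝ) * p ^ j * (1 - p) ^ (z - j) ≤ exp (t * k) * f j := by
    intro j hj
    have hjk : (j : ℝ) ≤ k := by exact_mod_cast Nat.lt_succ_iff.mp (mem_range.mp hj)
    have hweight : exp (t * k) * exp (-t) ^ j = exp (t * (k - j)) := by
      rw [← exp_nat_mul, ← exp_add]; ring_nf
    have hone : 1 ≤ exp (t * (k - j)) := one_le_exp (by nlinarith)
    have hnonneg : 0 ≤ (z.choose j : ℝ) * p ^ j * (1 - p) ^ (z - j) := by
      have : 0 ≤ 1 - p := by linarith
      positivity
    calc (z.choose j : ℝ) * p ^ j * (1 - p) ^ (z - j)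
        ≤ (z.choose j : ℝ) * p ^ j * (1 - p) ^ (z - j) * exp (t * (k - j)) :=
          le_mul_of_one_le_right hnonneg hone
      _ = _ := by rw [← hweight]; simp only [f, mul_pow]; ring
  calc binCDF z k p ≤ exp (t * k) * ∑ j ∈ range (k + 1), f j := by
        rw [mul_sum]; exact sum_le_sum hterm
    _ ≤ exp (t * k) * ∑ j ∈ range (z + 1), f j := by gcongr
    _ = exp (t * k) * (1 - p + p * exp (-t)) ^ z := by rw [← add_pow, add_comm]

theorem binCDF_le_exp_neg_two_mul_sq {z k : ℕ} {p : ℝ} (hp : p ∈ Set.Icc 0 1)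
    (hk : k ≤ z * p) :
    binCDF z k p ≤ exp (-(2 * (z * p - k) ^ 2 / z)) := by
  rcases Nat.eq_zero_or_pos z with rfl | hz
  · obtain rfl : k = 0 := by simpa using hk
    simp [binCDF]
  have hzR : (0 : ℝ) < z := by exact_mod_cast hz
  have hkz : k ≤ z := by exact_mod_cast hk.trans (mul_le_of_le_one_right hzR.le hp.2)
  -- `t` minimises the exponent `t * k + z * (-p * t + t ^ 2 / 8)`
  set t : ℝ := 4 * (z * p - k) / z
  have ht : 0 ≤ t := div_nonneg (by linarith) hzR.le
  have hbase : 0 ≤ 1 - p + p * exp (-t) :=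
    add_nonneg (sub_nonneg.2 hp.2) (mul_nonneg hp.1 (exp_pos _).le)
  calc binCDF z k p ≤ exp (t * k) * (1 - p + p * exp (-t)) ^ z :=
        binCDF_le_exp_mul_pow hp ht hkz
    _ ≤ exp (t * k) * exp (p * -t + (-t) ^ 2 / 8) ^ z := by
        gcongr; exact one_sub_add_mul_exp_le hp (-t)
    _ = exp (-(2 * (z * p - k) ^ 2 / z)) := by
        rw [← exp_nat_mul, ← exp_add]; congr 1; simp only [t]; field_simp; ring

lemma le_mul_and_le_two_mul_sq_div {ν L k z : ℝ} (hν : 0 < ν) (hL : 0 < L) (hk : 0 ≤ k)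
    (hz : k / ν + (√(2 * ν * k * L) + L) / (2 * ν ^ 2) ≤ z) :
    k ≤ z * ν ∧ L ≤ 2 * (z * ν - k) ^ 2 / z := by
  set S := √(2 * ν * k * L)
  have hS : 0 ≤ S := sqrt_nonneg _
  have hS2 : S ^ 2 = 2 * ν * k * L := sq_sqrt (by positivity)
  have hgap : S + L ≤ 2 * ν * (z * ν - k) := by
    have := mul_le_mul_of_nonneg_left hz (by positivity : (0 : ℝ) ≤ 2 * ν ^ 2)
    rw [mul_add, show 2 * ν ^ 2 * (k / ν) = 2 * ν * k by field_simp,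
      mul_div_cancel₀ _ (by positivity)] at this
    linarith
  have hkν : k ≤ z * ν := by nlinarith
  have hz0 : 0 < z := by nlinarith
  refine ⟨hkν, ?_⟩
  have hSk : k * L ≤ S * (z * ν - k) := by
    nlinarith [mul_le_mul_of_nonneg_left hgap hS, mul_nonneg hS hL.le]
  rw [le_div_iff₀ hz0, ← mul_le_mul_iff_of_pos_left hν]
  nlinarith [mul_le_mul_of_nonneg_left hgap (sub_nonneg.2 hkν)]

theorem stmt_6 (lam δ : ℝ) (k : ℕ) (hlam0 : 0 < lam) (hlam1 : lam < 1)
    (hδ0 : 0 < δ) (hδ1 : δ < 1) :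
    (zStar k δ lam : ℝ) ≤ (k : ℝ) / (1 - lam)
      + Real.sqrt (2 * (1 - lam) * k * Real.log (1 / δ)) / (2 * (1 - lam) ^ 2)
      + Real.log (1 / δ) / (2 * (1 - lam) ^ 2) + 1 := by
  set ν := 1 - lam
  set L := log (1 / δ)
  have hν : ν ∈ Set.Icc 0 1 := ⟨by linarith, by linarith⟩
  have hL : 0 < L := log_pos (one_lt_one_div hδ0 hδ1)
  set x := k / ν + (√(2 * ν * k * L) + L) / (2 * ν ^ 2)
  obtain ⟨hkν, hL_le⟩ :=
    le_mul_and_le_two_mul_sq_div (z := ⌈x⌉₊) (by linarith) hL k.cast_nonneg (Nat.le_ceil x)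
  have hk : k ≤ ⌈x⌉₊ := by
    exact_mod_cast hkν.trans (mul_le_of_le_one_right (by positivity) hν.2)
  have hB : binCDF ⌈x⌉₊ k ν ≤ δ := calc
    binCDF ⌈x⌉₊ k ν ≤ exp (-(2 * (⌈x⌉₊ * ν - k) ^ 2 / ⌈x⌉₊)) :=
      binCDF_le_exp_neg_two_mul_sq hν hkν
    _ ≤ exp (-L) := by gcongr
    _ = δ := by rw [exp_neg, exp_log (by positivity), one_div, inv_inv]
  have hmem : ⌈x⌉₊ ∈ {z | k ≤ z ∧ binCDF z k ν ≤ δ} := ⟨hk, hB⟩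
  calc (zStar k δ lam : ℝ) ≤ ⌈x⌉₊ := by exact_mod_cast Nat.sInf_le hmem
    _ ≤ x + 1 := (Nat.ceil_lt_add_one (by positivity)).le
    _ = _ := by ring
end

section
/- For 0 < δ ≤ 1/8, the function h_δ(x) := (1/(δx) − 1)·ln(1 − x/4) is strictly decreasing in x on (0, 1]. -/
/-!
Differentiating, `h_δ' < 0` on `(0, 4)` amounts to `-log (1 - x/4) < x (1 - δx) / (4 - x)`. For
`δ ≤ 1/8` this follows from `-log (1 - t) < t (2 - t) / (2 (1 - t))` at `t = x/4`, which is
`log y < sinh (log y) = (y - y⁻¹) / 2` at `y = (1 - t)⁻¹ > 1`.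
-/

open Real Set

lemma Real.log_lt_sub_inv_div_two {y : ℝ} (hy : 1 < y) : log y < (y - y⁻¹) / 2 := by
  rw [← sinh_log (by linarith)]
  exact self_lt_sinh_iff.mpr (log_pos hy)

lemma Real.neg_log_one_sub_lt_s9 {t : ℝ} (ht0 : 0 < t) (ht1 : t < 1) :
    -log (1 - t) < t * (2 - t) / (2 * (1 - t)) := by
  have hpos : 0 < 1 - t := by linarith
  have hy : 1 < (1 - t)⁻¹ := one_lt_inv₀ hpos |>.mpr (by linarith)
  calc -log (1 - t) = log (1 - t)⁻¹ := (log_inv _).symm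
    _ < ((1 - t)⁻¹ - (1 - t)⁻¹⁻¹) / 2 := log_lt_sub_inv_div_two hy
    _ = t * (2 - t) / (2 * (1 - t)) := by field_simp; ring

lemma hasDerivAt_inv_mul_sub_one_mul_log {δ x : ℝ} (hδ : δ ≠ 0) (hx0 : x ≠ 0) (hx4 : x < 4) :
    HasDerivAt (fun y : ℝ => (1 / (δ * y) - 1) * log (1 - y / 4))
      (-log (1 - x / 4) / (δ * x ^ 2) - (1 - δ * x) / (δ * x * (4 - x))) x := by
  have hδx : δ * x ≠ 0 := mul_ne_zero hδ hx0
  have h4 : 4 - x ≠ 0 := by linarith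
  have hlin : HasDerivAt (fun y : ℝ => 1 - y / 4) (-(1 / 4)) x := by
    simpa using ((hasDerivAt_id x).div_const 4).const_sub 1
  have hinv : HasDerivAt (fun y : ℝ => 1 / (δ * y) - 1) (-δ / (δ * x) ^ 2) x := by
    simpa [one_div] using (((hasDerivAt_id x).const_mul δ).inv (by simpa using hδx)).sub_const 1
  refine (hinv.mul (hlin.log (by linarith))).congr_deriv ?_
  field_simp
  ring

lemma inv_mul_sub_one_mul_log_deriv_neg {δ x : ℝ} (hδ0 : 0 < δ) (hδ1 : δ ≤ 1 / 8)
    (hx0 : 0 < x) (hx4 : x < 4) :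
    -log (1 - x / 4) / (δ * x ^ 2) - (1 - δ * x) / (δ * x * (4 - x)) < 0 := by
  have h4 : 0 < 4 - x := by linarith
  have hlog : -log (1 - x / 4) < x * (1 - δ * x) / (4 - x) :=
    calc -log (1 - x / 4) < x / 4 * (2 - x / 4) / (2 * (1 - x / 4)) :=
          neg_log_one_sub_lt_s9 (by positivity) (by linarith)
      _ = x * (1 - x / 8) / (4 - x) := by field_simp; ring
      _ ≤ x * (1 - δ * x) / (4 - x) := by gcongr; nlinarith
  have hsplit : (1 - δ * x) / (δ * x * (4 - x)) = x * (1 - δ * x) / (4 - x) / (δ * x ^ 2) := by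
    field_simp
  rw [hsplit, sub_neg]
  exact div_lt_div_of_pos_right hlog (by positivity)

lemma strictAntiOn_inv_mul_sub_one_mul_log {δ : ℝ} (hδ0 : 0 < δ) (hδ1 : δ ≤ 1 / 8) :
    StrictAntiOn (fun x : ℝ => (1 / (δ * x) - 1) * log (1 - x / 4)) (Ioo 0 4) := by
  have hderiv (x : ℝ) (hx : x ∈ Ioo (0 : ℝ) 4) :=
    hasDerivAt_inv_mul_sub_one_mul_log hδ0.ne' hx.1.ne' hx.2
  refine strictAntiOn_of_deriv_neg (convex_Ioo 0 4)
    (fun x hx => (hderiv x hx).continuousAt.continuousWithinAt) fun x hx => ?_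
  rw [interior_Ioo] at hx
  rw [(hderiv x hx).deriv]
  exact inv_mul_sub_one_mul_log_deriv_neg hδ0 hδ1 hx.1 hx.2

theorem stmt_9 (δ : ℝ) (hδ0 : 0 < δ) (hδ1 : δ ≤ 1 / 8) :
    StrictAntiOn (fun x : ℝ => (1 / (δ * x) - 1) * Real.log (1 - x / 4))
      (Set.Ioc 0 1) :=
  (strictAntiOn_inv_mul_sub_one_mul_log hδ0 hδ1).mono fun _ hx => ⟨hx.1, by linarith [hx.2]⟩
end

section
/- For all 0 < x ≤ 1, we have 2(1+x)·ln((3+x)/4) − x·ln x ≤ 0. -/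
/-! Bound `log ((3 + x) / 4)` from above by its tangent line `(x - 1) / 4` at `x = 1`, and
`x log x` from below by `(x² - 1) / 2`, which is `sinh y ≤ y` for `y = log x ≤ 0`.
The two bounds cancel exactly: `2 (1 + x) (x - 1) / 4 = (x² - 1) / 2`. -/

open Real

lemma Real.sub_inv_div_two_le_log {x : ℝ} (h0 : 0 < x) (h1 : x ≤ 1) : (x - x⁻¹) / 2 ≤ log x := by
  rw [← sinh_log h0]
  exact sinh_le_self_iff.2 (log_nonpos h0.le h1)

lemma Real.sq_sub_one_div_two_le_mul_log {x : ℝ} (h0 : 0 < x) (h1 : x ≤ 1) :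
    (x ^ 2 - 1) / 2 ≤ x * log x :=
  calc (x ^ 2 - 1) / 2 = x * ((x - x⁻¹) / 2) := by field_simp
    _ ≤ x * log x := by gcongr; exact sub_inv_div_two_le_log h0 h1

theorem stmt_10 (x : ℝ) (h0 : 0 < x) (h1 : x ≤ 1) :
    2 * (1 + x) * Real.log ((3 + x) / 4) - x * Real.log x ≤ 0 := by
  have hlog : log ((3 + x) / 4) ≤ (x - 1) / 4 := by
    linarith [log_le_sub_one_of_pos (by positivity : 0 < (3 + x) / 4)]
  calc 2 * (1 + x) * log ((3 + x) / 4) - x * log x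
      ≤ 2 * (1 + x) * ((x - 1) / 4) - (x ^ 2 - 1) / 2 := by
        gcongr
        exact sq_sub_one_div_two_le_mul_log h0 h1
    _ = 0 := by ring
end

section
/- For all 0 < x < 1, we have −((x+1)/x)·ln((3+x)/4) + ln x + ln(3/2) ≥ 0. -/
/-!
Multiplying by `x`, the claim becomes `x · log (6x / (3 + x)) ≥ log ((3 + x) / 4)`.
Both logarithms are bounded above by the `[2/1]` Padé approximant of `log` at `1`,
`log s ≤ (s - 1)(s + 5) / (4s + 2)`, and after this substitution the claim reduces to the
positivity of the cubic `298x³ + 1121x² - 720x + 117` on `x > 0`.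
-/

open Real Set

noncomputable def logPade (s : ℝ) : ℝ := (s - 1) * (s + 5) / (4 * s + 2)

lemma hasDerivAt_logPade_sub_log {s : ℝ} (hs : 0 < s) :
    HasDerivAt (fun t => logPade t - log t) (4 * (s - 1) ^ 3 / (s * (4 * s + 2) ^ 2)) s := by
  have hden : 4 * s + 2 ≠ 0 := by positivity
  have hnum : HasDerivAt (fun t : ℝ => (t - 1) * (t + 5)) (2 * s + 4) s := by
    refine (((hasDerivAt_id s).sub_const 1).fun_mul ((hasDerivAt_id s).add_const 5)).congr_deriv ?_
    simp only [id]
    ring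
  have hlin : HasDerivAt (fun t : ℝ => 4 * t + 2) 4 s := by
    simpa using ((hasDerivAt_id s).const_mul 4).add_const 2
  refine ((hnum.fun_div hlin hden).fun_sub (hasDerivAt_log hs.ne')).congr_deriv ?_
  field_simp
  ring

/-- The difference `logPade - log` vanishes at `1` and its derivative has the sign of
`(s - 1)³`, so `1` is its minimum on `(0, ∞)`. -/
lemma log_le_logPade {s : ℝ} (hs : 0 < s) : log s ≤ logPade s := by
  set g := fun t => logPade t - log t
  have hg1 : g 1 = 0 := by simp [g, logPade]
  have hcont : ContinuousOn g (Ioi 0) := fun t ht =>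
    (hasDerivAt_logPade_sub_log ht).continuousAt.continuousWithinAt
  suffices 0 ≤ g s by simpa [g] using this
  rw [← hg1]
  rcases le_total 1 s with h | h
  · refine monotoneOn_of_hasDerivWithinAt_nonneg (convex_Ici 1)
      (hcont.mono fun _ ht => zero_lt_one.trans_le (mem_Ici.mp ht))
      (fun t ht => (hasDerivAt_logPade_sub_log ?_).hasDerivWithinAt) (fun t ht => ?_)
      self_mem_Ici h h
    all_goals rw [interior_Ici, mem_Ioi] at ht
    · linarith
    · have : 0 < t := by linarith
      have : 0 ≤ (t - 1) ^ 3 := pow_nonneg (by linarith) 3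
      positivity
  · refine antitoneOn_of_hasDerivWithinAt_nonpos (convex_Ioc 0 1)
      (hcont.mono Ioc_subset_Ioi_self)
      (fun t ht => (hasDerivAt_logPade_sub_log ?_).hasDerivWithinAt) (fun t ht => ?_)
      ⟨hs, h⟩ ⟨zero_lt_one, le_rfl⟩ h
    all_goals rw [interior_Ioc, mem_Ioo] at ht
    · exact ht.1
    · have : (t - 1) ^ 3 ≤ 0 := Odd.pow_nonpos (by decide) (by linarith)
      have : 0 < t * (4 * t + 2) ^ 2 := by have := ht.1; positivity
      exact div_nonpos_of_nonpos_of_nonneg (by linarith) this.le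

lemma mul_eq_neg_log_sub_mul_log {x : ℝ} (hx : 0 < x) :
    x * (-((x + 1) / x) * log ((3 + x) / 4) + log x + log (3 / 2)) =
      -log ((3 + x) / 4) - x * log ((3 + x) / (6 * x)) := by
  have hsplit : log ((3 + x) / (6 * x)) = log ((3 + x) / 4) - log x - log (3 / 2) := by
    rw [show (3 + x) / (6 * x) = (3 + x) / 4 / x / (3 / 2) by field_simp; ring,
      log_div (by positivity) (by norm_num), log_div (by positivity) hx.ne']
  rw [hsplit]
  field_simp
  ring

/-- The numerator is positive on `x ≥ 0` since `1121x² - 720x + 117` has negative discriminant. -/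
lemma neg_logPade_sub_mul_logPade_nonneg {x : ℝ} (hx : 0 < x) :
    0 ≤ -logPade ((3 + x) / 4) - x * logPade ((3 + x) / (6 * x)) := by
  have heq : -logPade ((3 + x) / 4) - x * logPade ((3 + x) / (6 * x)) =
      (298 * x ^ 3 + 1121 * x ^ 2 - 720 * x + 117) / (48 * (x + 5) * (4 * x + 3)) := by
    unfold logPade
    have : x + 5 ≠ 0 := by positivity
    have : 4 * x + 3 ≠ 0 := by positivity
    field_simp
    ring
  rw [heq]
  apply div_nonneg _ (by positivity)
  nlinarith [sq_nonneg (x - 360 / 1121), pow_pos hx 3]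

theorem stmt_11_general (x : ℝ) (h0 : 0 < x) :
    -((x + 1) / x) * Real.log ((3 + x) / 4) + Real.log x + Real.log (3 / 2) ≥ 0 := by
  have hA := log_le_logPade (s := (3 + x) / 4) (by positivity)
  have hB := mul_le_mul_of_nonneg_left
    (log_le_logPade (s := (3 + x) / (6 * x)) (by positivity)) h0.le
  have hprod := mul_eq_neg_log_sub_mul_log h0
  have hpade := neg_logPade_sub_mul_logPade_nonneg h0
  exact le_of_mul_le_mul_left (by linarith) h0

theorem stmt_11 (x : ℝ) (h0 : 0 < x) (h1 : x < 1) :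
    -((x + 1) / x) * Real.log ((3 + x) / 4) + Real.log x + Real.log (3 / 2) ≥ 0 :=
  stmt_11_general x h0
end

section
/- For any fixed 0 < c < 1, the function η(c,x) := ln(1 − c·x)/ln(1 − x) is strictly decreasing in x on (0,1). -/
/-!
The derivative of `log (1 - c x) / log (1 - x)` has the sign of
`(1 - c x) log (1 - c x) - c (1 - x) log (1 - x)`, which is negative by strict convexity of
`t ↦ t log t`: the point `1 - c x` is the convex combination `c (1 - x) + (1 - c) · 1`, and
`t log t` vanishes at `t = 1`.
-/

open Real Set

lemma one_sub_mul_mul_log_lt {c x : ℝ} (hc0 : 0 < c) (hc1 : c < 1) (hx1 : x ≤ 1) (hx0 : x ≠ 0) :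
    (1 - c * x) * log (1 - c * x) < c * ((1 - x) * log (1 - x)) := by
  have hconv := strictConvexOn_mul_log.2 (x := 1 - x) (y := 1)
    (mem_Ici.2 (by linarith)) (mem_Ici.2 zero_le_one) (by contrapose! hx0; linarith)
    hc0 (sub_pos.2 hc1) (add_sub_cancel c 1)
  have hcomb : c * (1 - x) + (1 - c) * 1 = 1 - c * x := by ring
  simpa only [smul_eq_mul, log_one, mul_zero, add_zero, hcomb] using hconv

lemma hasDerivAt_log_one_sub_mul_div_log_one_sub {c x : ℝ} (hx : 0 < 1 - x)
    (hcx : 0 < 1 - c * x) (hlog : log (1 - x) ≠ 0) :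
    HasDerivAt (fun x => log (1 - c * x) / log (1 - x))
      (((1 - c * x) * log (1 - c * x) - c * ((1 - x) * log (1 - x))) /
        ((1 - c * x) * (1 - x) * log (1 - x) ^ 2)) x := by
  have hnum : HasDerivAt (fun x => log (1 - c * x)) (-c / (1 - c * x)) x := by
    simpa using (((hasDerivAt_id x).const_mul c).const_sub 1).log hcx.ne'
  have hden : HasDerivAt (fun x => log (1 - x)) (-1 / (1 - x)) x := by
    simpa using ((hasDerivAt_id x).const_sub 1).log hx.ne'
  refine (hnum.fun_div hden hlog).congr_deriv ?_
  field_simp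
  ring

theorem stmt_12 (c : ℝ) (hc0 : 0 < c) (hc1 : c < 1) :
    StrictAntiOn (fun x : ℝ => Real.log (1 - c * x) / Real.log (1 - x))
      (Set.Ioo 0 1) := by
  have hderiv : ∀ x ∈ Ioo (0 : ℝ) 1, HasDerivAt (fun x => log (1 - c * x) / log (1 - x))
      (((1 - c * x) * log (1 - c * x) - c * ((1 - x) * log (1 - x))) /
        ((1 - c * x) * (1 - x) * log (1 - x) ^ 2)) x := fun x ⟨hx0, hx1⟩ =>
    hasDerivAt_log_one_sub_mul_div_log_one_sub (by linarith) (by nlinarith)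
      (log_neg (by linarith) (by linarith)).ne
  refine strictAntiOn_of_deriv_neg (convex_Ioo 0 1)
    (fun x hx => (hderiv x hx).continuousAt.continuousWithinAt) fun x hx => ?_
  rw [interior_Ioo] at hx
  obtain ⟨hx0, hx1⟩ := hx
  have hcx : 0 < 1 - c * x := by nlinarith
  have hx : 0 < 1 - x := by linarith
  have hlog : log (1 - x) ≠ 0 := (log_neg hx (by linarith)).ne
  rw [(hderiv x ⟨hx0, hx1⟩).deriv]
  exact div_neg_of_neg_of_pos
    (sub_neg.2 (one_sub_mul_mul_log_lt hc0 hc1 hx1.le hx0.ne')) (by positivity)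
end

section
/- For all 0 < r < 1, we have 2(1 + r)(1 − r) + 4r·ln r > 0. -/
theorem stmt_14 (r : ℝ) (h0 : 0 < r) (h1 : r < 1) :
    0 < 2 * (1 + r) * (1 - r) + 4 * r * Real.log r := by
  set a : ℝ := -Real.log r with ha
  clear_value a
  have hapos : 0 < a := by
    have := Real.log_neg h0 h1
    simp [ha]; linarith
  have hexp : 1 + a + a ^ 2 / 2 ≤ Real.exp a := Real.quadratic_le_exp_of_nonneg hapos.le
  have hra : r * Real.exp a = 1 := by
    rw [ha, Real.exp_neg, Real.exp_log h0]
    field_simp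
  have hr1 : r * (1 + a + a ^ 2 / 2) ≤ 1 := by
    nlinarith [mul_le_mul_of_nonneg_left hexp h0.le]
  have hlog : Real.log r = -a := by rw [ha]; ring
  rw [hlog]
  set s : ℝ := 1 + a + a ^ 2 / 2 with hs
  clear_value s
  have hspos : 0 < s := by rw [hs]; positivity
  have h2 : 0 ≤ 1 - r * s := by linarith
  have h3 : 0 ≤ 1 - (r * s) ^ 2 := by nlinarith [mul_pos h0 hspos]
  have h4 : 0 ≤ a * s * (1 - r * s) := by positivity
  have h5 : 0 < a ^ 4 := by positivity
  have key : s ^ 2 * (1 - r ^ 2 - 2 * r * a)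
      = (1 - (r * s) ^ 2) + 2 * (a * s * (1 - r * s)) + a ^ 4 / 4 := by
    rw [hs]; ring
  have h7 : 0 < s ^ 2 * (1 - r ^ 2 - 2 * r * a) := by rw [key]; linarith
  have h8 : 0 < 1 - r ^ 2 - 2 * r * a := by
    nlinarith [mul_pos hspos hspos]
  nlinarith
end

section
/- Fix 0 < r < 1 and 0 < a < 1 with a ≠ r. Then the function q ↦ D(aq ‖ rq)/q is nondecreasing in q on (0,1), where D is the binary relative entropy. -/
open Real Set

lemma binRelEnt_mul_div_eq (a r : ℝ) {q : ℝ} (hq : q ≠ 0) :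
    binRelEnt (a * q) (r * q) / q =
      a * log (a / r) + (q⁻¹ - a) * log ((q⁻¹ - a) / (q⁻¹ - r)) := by
  have hinv : q⁻¹ ≠ 0 := inv_ne_zero hq
  have hratio : (q⁻¹ - a) / (q⁻¹ - r) = (1 - a * q) / (1 - r * q) := by
    rw [← mul_div_mul_left (1 - a * q) (1 - r * q) hinv]
    congr 1 <;> field_simp
  rw [binRelEnt, mul_div_mul_right _ _ hq, hratio]
  field_simp

lemma hasDerivAt_sub_mul_log_div_sub {a r t : ℝ} (ha : a < t) (hr : r < t) :
    HasDerivAt (fun t => (t - a) * log ((t - a) / (t - r)))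
      (log ((t - a) / (t - r)) + 1 - (t - a) / (t - r)) t := by
  have hta : t - a ≠ 0 := (sub_pos.2 ha).ne'
  have htr : t - r ≠ 0 := (sub_pos.2 hr).ne'
  have hratio : HasDerivAt (fun t => (t - a) / (t - r))
      ((1 * (t - r) - (t - a) * 1) / (t - r) ^ 2) t :=
    ((hasDerivAt_id' t).sub_const a).div ((hasDerivAt_id' t).sub_const r) htr
  refine (((hasDerivAt_id' t).sub_const a).fun_mul
    (hratio.log (div_ne_zero hta htr))).congr_deriv ?_
  field_simp
  ring

lemma antitoneOn_sub_mul_log_div_sub (a r : ℝ) :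
    AntitoneOn (fun t => (t - a) * log ((t - a) / (t - r))) (Ioi (max a r)) := by
  have hderiv : ∀ t ∈ Ioi (max a r), HasDerivAt (fun t => (t - a) * log ((t - a) / (t - r)))
      (log ((t - a) / (t - r)) + 1 - (t - a) / (t - r)) t := fun t ht =>
    hasDerivAt_sub_mul_log_div_sub (max_lt_iff.1 ht).1 (max_lt_iff.1 ht).2
  refine antitoneOn_of_hasDerivWithinAt_nonpos (convex_Ioi _)
    (fun t ht => (hderiv t ht).continuousAt.continuousWithinAt)
    (fun t ht => (hderiv t (interior_subset ht)).hasDerivWithinAt) fun t ht => ?_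
  obtain ⟨ha, hr⟩ := max_lt_iff.1 (interior_subset ht)
  have := log_le_sub_one_of_pos (div_pos (sub_pos.2 ha) (sub_pos.2 hr))
  linarith

theorem stmt_15_general (r a : ℝ) (hr1 : r < 1) (ha1 : a < 1) :
    MonotoneOn (fun q : ℝ => binRelEnt (a * q) (r * q) / q) (Set.Ioo 0 1) := by
  have hmem : ∀ q ∈ Ioo (0 : ℝ) 1, q⁻¹ ∈ Ioi (max a r) := fun q hq =>
    (max_lt ha1 hr1).trans ((one_lt_inv₀ hq.1).2 hq.2)
  intro x hx y hy hxy
  simp only [binRelEnt_mul_div_eq a r hx.1.ne', binRelEnt_mul_div_eq a r hy.1.ne']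
  gcongr _ + ?_
  exact antitoneOn_sub_mul_log_div_sub a r (hmem y hy) (hmem x hx) (inv_anti₀ hx.1 hxy)

theorem stmt_15 (r a : ℝ) (hr0 : 0 < r) (hr1 : r < 1) (ha0 : 0 < a) (ha1 : a < 1)
    (hne : a ≠ r) :
    MonotoneOn (fun q : ℝ => binRelEnt (a * q) (r * q) / q) (Set.Ioo 0 1) :=
  stmt_15_general r a hr1 ha1
end

section
/- Fix 0 < r < 1 and define β(r,p) := ln((1−p)/(1−rp)) / (ln r + ln((1−p)/(1−rp))) for 0 < p < 1. Then the function p ↦ β(r,p)/p is strictly increasing on (0,1). -/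
/-- The function β(r,p). -/
noncomputable def betaFn (r p : ℝ) : ℝ :=
  Real.log ((1 - p) / (1 - r * p)) / (Real.log r + Real.log ((1 - p) / (1 - r * p)))

/-!
Put `t = log ((1 - r p) / (1 - p))`, which is positive and strictly increasing in `p`, and
`b = -log r > 0`. Then `β(r, p) = t / (t + b)` and `p = (eᵗ - 1) / (eᵗ - r)`, so that
`β(r, p) / p = r · φ(t + b) / φ(t)` with `φ(x) = (eˣ - 1) / x`. The function `log φ` is strictly
convex on `(0, ∞)`: its derivative `eˣ / (eˣ - 1) - 1 / x` has derivative
`1 / x² - eˣ / (eˣ - 1)²`, which is positive because `2 sinh (x / 2) > x`. Hence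
`log φ(t + b) - log φ(t)` is strictly increasing in `t`.
-/

open Real Set

noncomputable def expSlope (x : ℝ) : ℝ := (exp x - 1) / x

lemma exp_sub_one_pos {x : ℝ} (hx : 0 < x) : 0 < exp x - 1 :=
  sub_pos.2 (one_lt_exp_iff.2 hx)

lemma expSlope_pos {x : ℝ} (hx : 0 < x) : 0 < expSlope x :=
  div_pos (exp_sub_one_pos hx) hx

lemma sq_mul_exp_lt_sq_exp_sub_one {x : ℝ} (hx : 0 < x) : x ^ 2 * exp x < (exp x - 1) ^ 2 := by
  have hsinh : x < exp (x / 2) - exp (-(x / 2)) := by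
    have := self_lt_sinh_iff.2 (half_pos hx)
    rw [sinh_eq] at this
    linarith
  have hmul : x * exp (x / 2) < exp x - 1 := by
    have := mul_lt_mul_of_pos_right hsinh (exp_pos (x / 2))
    rwa [sub_mul, ← exp_add, ← exp_add, add_halves, neg_add_cancel, exp_zero] at this
  calc x ^ 2 * exp x = (x * exp (x / 2)) ^ 2 := by rw [mul_pow, ← exp_nat_mul]; ring_nf
    _ < (exp x - 1) ^ 2 := pow_lt_pow_left₀ hmul (by positivity) two_ne_zero

lemma hasDerivAt_log_expSlope {x : ℝ} (hx : 0 < x) :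
    HasDerivAt (fun x => log (expSlope x)) (exp x / (exp x - 1) - x⁻¹) x := by
  have hex := (exp_sub_one_pos hx).ne'
  refine ((((hasDerivAt_exp x).sub_const 1).div (hasDerivAt_id' x) hx.ne').log
    (expSlope_pos hx).ne').congr_deriv ?_
  simp only [Pi.div_apply]
  field_simp

lemma strictMonoOn_deriv_log_expSlope :
    StrictMonoOn (fun x => exp x / (exp x - 1) - x⁻¹) (Ioi 0) := by
  have hderiv : ∀ x : ℝ, 0 < x →
      HasDerivAt (fun x => exp x / (exp x - 1) - x⁻¹) ((x ^ 2)⁻¹ - exp x / (exp x - 1) ^ 2) x := by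
    intro x hx
    have hex := (exp_sub_one_pos hx).ne'
    refine (((hasDerivAt_exp x).div ((hasDerivAt_exp x).sub_const 1) hex).sub
      (hasDerivAt_inv hx.ne')).congr_deriv ?_
    field_simp
    ring
  refine strictMonoOn_of_deriv_pos (convex_Ioi 0)
    (fun x hx => (hderiv x hx).continuousAt.continuousWithinAt) fun x hx => ?_
  rw [interior_Ioi] at hx
  rw [(hderiv x hx).deriv, sub_pos, div_lt_iff₀ (pow_pos (exp_sub_one_pos hx) 2),
    ← div_eq_inv_mul, lt_div_iff₀ (pow_pos hx 2), mul_comm]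
  exact sq_mul_exp_lt_sq_exp_sub_one hx

lemma strictMonoOn_expSlope_add_div_expSlope {b : ℝ} (hb : 0 < b) :
    StrictMonoOn (fun t => expSlope (t + b) / expSlope t) (Ioi 0) := by
  have hderiv : ∀ t : ℝ, 0 < t → HasDerivAt (fun t => log (expSlope (t + b)) - log (expSlope t))
      ((exp (t + b) / (exp (t + b) - 1) - (t + b)⁻¹) - (exp t / (exp t - 1) - t⁻¹)) t := fun t ht =>
    ((hasDerivAt_log_expSlope (add_pos ht hb)).comp_add_const t b).sub (hasDerivAt_log_expSlope ht)
  have hlog : StrictMonoOn (fun t => log (expSlope (t + b)) - log (expSlope t)) (Ioi 0) := by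
    refine strictMonoOn_of_deriv_pos (convex_Ioi 0)
      (fun t ht => (hderiv t ht).continuousAt.continuousWithinAt) fun t ht => ?_
    rw [interior_Ioi] at ht
    rw [(hderiv t ht).deriv, sub_pos]
    exact strictMonoOn_deriv_log_expSlope ht (mem_Ioi.2 (add_pos ht hb)) (lt_add_of_pos_right t hb)
  intro s hs t ht hst
  have hexp : ∀ t : ℝ, 0 < t →
      expSlope (t + b) / expSlope t = exp (log (expSlope (t + b)) - log (expSlope t)) := fun t ht => by
    rw [exp_sub, exp_log (expSlope_pos (add_pos ht hb)), exp_log (expSlope_pos ht)]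
  dsimp only
  rw [hexp s hs, hexp t ht]
  exact exp_lt_exp.2 (hlog hs ht hst)

lemma betaFn_div_eq {r p : ℝ} (hr0 : 0 < r) (hr1 : r < 1) (hp0 : 0 < p) (hp1 : p < 1) :
    betaFn r p / p = r * (expSlope (log ((1 - r * p) / (1 - p)) + -log r) /
      expSlope (log ((1 - r * p) / (1 - p)))) := by
  have h1p : 0 < 1 - p := sub_pos.2 hp1
  have h1rp : 0 < 1 - r * p := by nlinarith
  have hu : 1 < (1 - r * p) / (1 - p) := by rw [one_lt_div h1p]; nlinarith
  set a := log ((1 - r * p) / (1 - p)) with ha_def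
  have ha : 0 < a := log_pos hu
  have hb : 0 < -log r := neg_pos.2 (log_neg hr0 hr1)
  have hexp : exp a = (1 - r * p) / (1 - p) := exp_log (by positivity)
  have hbeta : betaFn r p = a / (a + -log r) := by
    have hlog : log ((1 - p) / (1 - r * p)) = -a := by rw [ha_def, ← log_inv, inv_div]
    rw [betaFn, hlog, show log r + -a = -(a + -log r) by ring, neg_div_neg_eq]
  have h1r : 1 - r ≠ 0 := (sub_pos.2 hr1).ne'
  have hshift : (1 - r * p) / (1 - p) * r⁻¹ - 1 = (1 - r) / (r * (1 - p)) := by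
    field_simp; ring
  have hbase : (1 - r * p) / (1 - p) - 1 = p * (1 - r) / (1 - p) := by
    field_simp; ring
  rw [hbeta, expSlope, expSlope, exp_add, exp_neg, exp_log hr0, hexp, hshift, hbase]
  field_simp

lemma strictMonoOn_log_one_sub_mul_div_one_sub {r : ℝ} (hr1 : r < 1) :
    StrictMonoOn (fun p => log ((1 - r * p) / (1 - p))) (Ioo 0 1) := by
  intro p ⟨hp0, hp1⟩ q ⟨hq0, hq1⟩ hpq
  have h1p : 0 < 1 - p := sub_pos.2 hp1
  have h1q : 0 < 1 - q := sub_pos.2 hq1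
  refine log_lt_log (div_pos (by nlinarith) h1p) ?_
  rw [div_lt_div_iff₀ h1p h1q]
  nlinarith

theorem stmt_16 (r : ℝ) (hr0 : 0 < r) (hr1 : r < 1) :
    StrictMonoOn (fun p : ℝ => betaFn r p / p) (Set.Ioo 0 1) := by
  have hmaps : MapsTo (fun p => log ((1 - r * p) / (1 - p))) (Ioo 0 1) (Ioi 0) :=
    fun p ⟨_, hp1⟩ => log_pos ((one_lt_div (sub_pos.2 hp1)).2 (by nlinarith))
  have hratio := (strictMonoOn_expSlope_add_div_expSlope (neg_pos.2 (log_neg hr0 hr1))).comp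
    (strictMonoOn_log_one_sub_mul_div_one_sub hr1) hmaps
  intro p hp q hq hpq
  simp only [betaFn_div_eq hr0 hr1 hp.1 hp.2, betaFn_div_eq hr0 hr1 hq.1 hq.2]
  exact mul_lt_mul_of_pos_left (hratio hp hq hpq) hr0
end

section
/- Fix 0 < r < 1 and define β(r,p) := ln((1−p)/(1−rp)) / (ln r + ln((1−p)/(1−rp))) for 0 < p < 1. Then rp < β(r,p) < p, and D(β(r,p) ‖ p) = D(β(r,p) ‖ rp), where D is the binary relative entropy. -/
/-!
Writing `a = log ((1 - p) / (1 - r p))` and `b = log r`, one has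
`D(x‖p) - D(x‖rp) = x b - (1 - x) a`, which vanishes exactly at `x = a / (a + b) = β(r,p)`.
The bounds `rp < β < p` follow from `u log (v / u) < v - u < v log (v / u)` (that is,
`1 - 1/t < log t < t - 1` for `t = v / u ≠ 1`) applied to the pairs `(p, rp)` and `(1 - rp, 1 - p)`.
-/

open Real

theorem mul_log_div_lt_sub {u v : ℝ} (hu : 0 < u) (hv : 0 < v) (huv : u ≠ v) :
    u * log (v / u) < v - u := by
  have h := log_lt_sub_one_of_pos (div_pos hv hu) (by rwa [Ne, div_eq_one_iff_eq hu.ne', eq_comm])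
  calc u * log (v / u) < u * (v / u - 1) := mul_lt_mul_of_pos_left h hu
    _ = v - u := by field_simp

theorem sub_lt_mul_log_div {u v : ℝ} (hu : 0 < u) (hv : 0 < v) (huv : u ≠ v) :
    v - u < v * log (v / u) := by
  have h := mul_log_div_lt_sub hv hu huv.symm
  rw [← inv_div, log_inv] at h
  linarith

theorem mul_log_div_sub_mul_log_div (x : ℝ) {q q' : ℝ} (hq : q ≠ 0) (hq' : q' ≠ 0) :
    x * log (x / q) - x * log (x / q') = x * log (q' / q) := by
  rcases eq_or_ne x 0 with rfl | hx
  · simp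
  · rw [log_div hx hq, log_div hx hq', log_div hq' hq]
    ring

theorem binRelEnt_sub_binRelEnt (x : ℝ) {q q' : ℝ} (hq0 : q ≠ 0) (hq'0 : q' ≠ 0) (hq1 : q ≠ 1)
    (hq'1 : q' ≠ 1) :
    binRelEnt x q - binRelEnt x q' = x * log (q' / q) + (1 - x) * log ((1 - q') / (1 - q)) := by
  rw [← mul_log_div_sub_mul_log_div x hq0 hq'0,
    ← mul_log_div_sub_mul_log_div (1 - x) (sub_ne_zero.2 hq1.symm) (sub_ne_zero.2 hq'1.symm)]
  unfold binRelEnt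
  ring

section Crossover

variable {r p : ℝ} (hr0 : 0 < r) (hr1 : r < 1) (hp0 : 0 < p) (hp1 : p < 1)
include hr0 hr1 hp0 hp1

theorem log_add_log_one_sub_div_neg : log r + log ((1 - p) / (1 - r * p)) < 0 := by
  have hrp : r * p < p := mul_lt_of_lt_one_left hp0 hr1
  have h : (1 - p) / (1 - r * p) < 1 := (div_lt_one (by nlinarith)).2 (by linarith)
  linarith [log_neg hr0 hr1, log_neg (div_pos (by linarith) (by nlinarith)) h]

theorem mul_lt_betaFn : r * p < betaFn r p := by
  have hrp : r * p < p := mul_lt_of_lt_one_left hp0 hr1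
  have h1 := sub_lt_mul_log_div hp0 (mul_pos hr0 hp0) hrp.ne'
  have h2 := mul_log_div_lt_sub (u := 1 - r * p) (v := 1 - p) (by linarith) (by linarith)
    (by linarith)
  rw [mul_div_cancel_right₀ r hp0.ne'] at h1
  rw [betaFn, lt_div_iff_of_neg (log_add_log_one_sub_div_neg hr0 hr1 hp0 hp1)]
  linarith

theorem betaFn_lt : betaFn r p < p := by
  have hrp : r * p < p := mul_lt_of_lt_one_left hp0 hr1
  have h1 := mul_log_div_lt_sub hp0 (mul_pos hr0 hp0) hrp.ne'
  have h2 := sub_lt_mul_log_div (u := 1 - r * p) (v := 1 - p) (by linarith) (by linarith)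
    (by linarith)
  rw [mul_div_cancel_right₀ r hp0.ne'] at h1
  rw [betaFn, div_lt_iff_of_neg (log_add_log_one_sub_div_neg hr0 hr1 hp0 hp1)]
  linarith

theorem binRelEnt_betaFn_eq : binRelEnt (betaFn r p) p = binRelEnt (betaFn r p) (r * p) := by
  have hsum := (log_add_log_one_sub_div_neg hr0 hr1 hp0 hp1).ne
  rw [← sub_eq_zero, binRelEnt_sub_binRelEnt _ hp0.ne' (mul_pos hr0 hp0).ne' hp1.ne (by nlinarith),
    mul_div_cancel_right₀ r hp0.ne', ← inv_div, log_inv, betaFn]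
  generalize log ((1 - p) / (1 - r * p)) = a at hsum ⊢
  field_simp
  ring

end Crossover

theorem stmt_17 (r p : ℝ) (hr0 : 0 < r) (hr1 : r < 1) (hp0 : 0 < p) (hp1 : p < 1) :
    r * p < betaFn r p ∧ betaFn r p < p ∧
      binRelEnt (betaFn r p) p = binRelEnt (betaFn r p) (r * p) :=
  ⟨mul_lt_betaFn hr0 hr1 hp0 hp1, betaFn_lt hr0 hr1 hp0 hp1, binRelEnt_betaFn_eq hr0 hr1 hp0 hp1⟩
end
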